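/- arXiv:2103.05130 — 6 statements merged into one kernel-verified Lean document; each statement's English description precedes it below -/
import Mathlib

section
/- Let Λ ⊆ ℝ^{n} × ℝ^{m} (finite-dimensional Euclidean spaces) be a convex set, r ∈ ℝ^{m}, and f : ℝ^{n} × ℝ^{m} → ℝ^{n} a function satisfying the invariance property: (x, v) ∈ Λ implies (f(x, v), v) ∈ Λ. For x ∈ ℝ^{n}, write S_v(Λ, x) = {v : (x, v) ∈ Λ} for the slice of Λ at x. Suppose g : ℝ^{n} → ℝ^{m} satisfies: whenever S_v(Λ, x) is nonempty, g(x) ∈ S_v(Λ, x) and ‖g(x) − r‖ ≤ ‖s − r‖ for all s ∈ S_v(Λ, x). Then for every (x, v) ∈ Λ, ‖g(f(x, v)) − r‖² − ‖v − r‖² ≤ −‖g(f(x, v)) − v‖² ≤ 0. -/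
open scoped RealInnerProductSpace

/-- Abstract form of Lemma 2 (increment bound) for the feasibility governor. -/
theorem fg_increment_bound
    {n m : ℕ}
    (Λ : Set (EuclideanSpace ℝ (Fin n) × EuclideanSpace ℝ (Fin m)))
    (hΛ : Convex ℝ Λ)
    (r : EuclideanSpace ℝ (Fin m))
    (f : EuclideanSpace ℝ (Fin n) → EuclideanSpace ℝ (Fin m) → EuclideanSpace ℝ (Fin n))
    (hf : ∀ x v, (x, v) ∈ Λ → (f x v, v) ∈ Λ)
    (g : EuclideanSpace ℝ (Fin n) → EuclideanSpace ℝ (Fin m))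
    (hg : ∀ x : EuclideanSpace ℝ (Fin n), {v | (x, v) ∈ Λ}.Nonempty →
      (x, g x) ∈ Λ ∧ ∀ s, (x, s) ∈ Λ → ‖g x - r‖ ≤ ‖s - r‖) :
    ∀ x v, (x, v) ∈ Λ →
      ‖g (f x v) - r‖ ^ 2 - ‖v - r‖ ^ 2 ≤ -‖g (f x v) - v‖ ^ 2 ∧
      -‖g (f x v) - v‖ ^ 2 ≤ 0 := by
  intro x v hxv
  set y := f x v with hy
  have hvS : (y, v) ∈ Λ := hf x v hxv
  have hne : {s | (y, s) ∈ Λ}.Nonempty := ⟨v, hvS⟩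
  obtain ⟨hwΛ, hmin⟩ := hg y hne
  set w := g y with hw
  -- key inner product inequality
  have key : (0:ℝ) ≤ ⟪w - r, v - w⟫ := by
    by_contra hcon
    push_neg at hcon
    set c : ℝ := ⟪w - r, v - w⟫ with hc
    have hvw : v - w ≠ 0 := by
      intro h
      rw [hc, h, inner_zero_right] at hcon
      exact lt_irrefl _ hcon
    have hd : (0:ℝ) < ‖v - w‖ ^ 2 := pow_pos (norm_pos_iff.mpr hvw) 2
    set d : ℝ := ‖v - w‖ ^ 2 with hdd
    set t : ℝ := min 1 (-c / d) with ht
    have ht0 : 0 < t := lt_min one_pos (div_pos (by linarith) hd)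
    have ht1 : t ≤ 1 := min_le_left _ _
    have htd : t * d ≤ -c := by
      have := min_le_right 1 (-c / d)
      calc t * d ≤ (-c / d) * d := by nlinarith
        _ = -c := by field_simp
    -- the convex combination point
    have hp : (y, (1 - t) • w + t • v) ∈ Λ := by
      have := hΛ hwΛ hvS (by linarith : (0:ℝ) ≤ 1 - t) (le_of_lt ht0) (by ring)
      simpa [Prod.smul_mk, Prod.mk_add_mk, smul_smul, ← add_smul,
        show (1 - t) + t = 1 by ring] using this
    have hle : ‖w - r‖ ≤ ‖(1 - t) • w + t • v - r‖ := hmin _ hp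
    have hrw : (1 - t) • w + t • v - r = (w - r) + t • (v - w) := by
      module
    have hexp : ‖(w - r) + t • (v - w)‖ ^ 2
        = ‖w - r‖ ^ 2 + 2 * (t * c) + t ^ 2 * d := by
      rw [norm_add_sq_real, real_inner_smul_right, norm_smul]
      simp [hc, hdd, mul_pow, abs_of_pos ht0]
    have h2 : ‖w - r‖ ^ 2 ≤ ‖(w - r) + t • (v - w)‖ ^ 2 := by
      rw [← hrw]
      exact pow_le_pow_left₀ (norm_nonneg _) hle 2
    rw [hexp] at h2
    nlinarith
  have hexp2 : ‖v - r‖ ^ 2 = ‖w - r‖ ^ 2 + 2 * ⟪w - r, v - w⟫ + ‖v - w‖ ^ 2 := by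
    have : v - r = (w - r) + (v - w) := by abel
    rw [this, norm_add_sq_real]
  have hsym : ‖w - v‖ = ‖v - w‖ := norm_sub_rev _ _
  constructor
  · rw [hsym]; nlinarith
  · exact neg_nonpos.mpr (by positivity)
end

section
/- Let Λ ⊆ ℝ^{n} × ℝ^{m} be convex, r ∈ ℝ^{m}, and f : ℝ^{n} × ℝ^{m} → ℝ^{n} satisfy: (x, v) ∈ Λ implies (f(x, v), v) ∈ Λ. Let g : ℝ^{n} → ℝ^{m} satisfy: whenever the slice S_v(Λ, x) = {v : (x, v) ∈ Λ} is nonempty, g(x) ∈ S_v(Λ, x) and ‖g(x) − r‖ ≤ ‖s − r‖ for all s ∈ S_v(Λ, x). Define v_k = g(x_k) and x_{k+1} = f(x_k, v_k), and suppose S_v(Λ, x_0) ≠ ∅. Then for every k ∈ ℕ, ‖v_{k+1} − r‖² ≤ ‖v_k − r‖² − ‖v_{k+1} − v_k‖²; in particular k ↦ ‖v_k − r‖ is nonincreasing. -/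
open RealInnerProductSpace

/-- Obtuse-angle / projection inequality: if `p` minimizes `‖· - r‖` on a convex
set `K` and `s ∈ K`, then `‖p - r‖² ≤ ‖s - r‖² - ‖p - s‖²`. -/
lemma min_sq_le_of_convex {E : Type*} [NormedAddCommGroup E] [InnerProductSpace ℝ E]
    {K : Set E} (hK : Convex ℝ K) {r p s : E} (hp : p ∈ K) (hs : s ∈ K)
    (hmin : ∀ w ∈ K, ‖p - r‖ ≤ ‖w - r‖) :
    ‖p - r‖ ^ 2 ≤ ‖s - r‖ ^ 2 - ‖p - s‖ ^ 2 := by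
  haveI : Nonempty K := ⟨⟨p, hp⟩⟩
  have hinf : ‖r - p‖ = ⨅ w : K, ‖r - w‖ := by
    refine le_antisymm ?_ ?_
    · exact le_ciInf fun w => by
        simpa [norm_sub_rev] using hmin w w.2
    · exact ciInf_le ⟨0, fun b hb => by rcases hb with ⟨w, rfl⟩; positivity⟩ (⟨p, hp⟩ : K)
  have hineq := (norm_eq_iInf_iff_real_inner_le_zero hK hp).mp hinf s hs
  -- hineq : ⟪r - p, s - p⟫ ≤ 0
  have hexp : ‖s - r‖ ^ 2 = ‖s - p‖ ^ 2 + 2 * ⟪s - p, p - r⟫ + ‖p - r‖ ^ 2 := by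
    have : s - r = (s - p) + (p - r) := by abel
    rw [this, norm_add_sq_real]
  have h2 : (0:ℝ) ≤ ⟪s - p, p - r⟫ := by
    have : ⟪s - p, p - r⟫ = -⟪r - p, s - p⟫ := by
      rw [real_inner_comm]
      rw [show (p - r) = -(r - p) by abel, inner_neg_left]
    linarith
  rw [norm_sub_rev p s]
  linarith

/-- Lyapunov monotonicity along closed-loop trajectories (used in Theorem 3):
the governor cost `V(v) = ‖v - r‖²` decreases by at least the squared step. -/
theorem fg_lyapunov_monotone
    {n m : ℕ}
    (Λ : Set (EuclideanSpace ℝ (Fin n) × EuclideanSpace ℝ (Fin m)))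
    (hΛ : Convex ℝ Λ)
    (r : EuclideanSpace ℝ (Fin m))
    (f : EuclideanSpace ℝ (Fin n) → EuclideanSpace ℝ (Fin m) → EuclideanSpace ℝ (Fin n))
    (hf : ∀ x v, (x, v) ∈ Λ → (f x v, v) ∈ Λ)
    (g : EuclideanSpace ℝ (Fin n) → EuclideanSpace ℝ (Fin m))
    (hg : ∀ x : EuclideanSpace ℝ (Fin n), {v | (x, v) ∈ Λ}.Nonempty →
      (x, g x) ∈ Λ ∧ ∀ s, (x, s) ∈ Λ → ‖g x - r‖ ≤ ‖s - r‖)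
    (x : ℕ → EuclideanSpace ℝ (Fin n))
    (v : ℕ → EuclideanSpace ℝ (Fin m))
    (hv : ∀ k, v k = g (x k))
    (hx : ∀ k, x (k + 1) = f (x k) (v k))
    (h0 : {w | (x 0, w) ∈ Λ}.Nonempty) :
    (∀ k, ‖v (k + 1) - r‖ ^ 2 ≤ ‖v k - r‖ ^ 2 - ‖v (k + 1) - v k‖ ^ 2) ∧
    Antitone (fun k => ‖v k - r‖) := by
  -- slices are convex
  have hslice : ∀ a : EuclideanSpace ℝ (Fin n), Convex ℝ {w | (a, w) ∈ Λ} := by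
    intro a w1 hw1 w2 hw2 t s ht hs hts
    have := hΛ hw1 hw2 ht hs hts
    simpa [Prod.smul_mk, Prod.mk_add_mk, Convex.combo_self hts] using this
  -- membership along the trajectory
  have hmem : ∀ k, (x k, v k) ∈ Λ := by
    intro k
    induction k with
    | zero => rw [hv 0]; exact (hg (x 0) h0).1
    | succ k ih =>
      have h1 : (x (k + 1), v k) ∈ Λ := by rw [hx k]; exact hf _ _ ih
      rw [hv (k + 1)]
      exact (hg (x (k + 1)) ⟨v k, h1⟩).1
  have key : ∀ k, ‖v (k + 1) - r‖ ^ 2 ≤ ‖v k - r‖ ^ 2 - ‖v (k + 1) - v k‖ ^ 2 := by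
    intro k
    have h1 : (x (k + 1), v k) ∈ Λ := by rw [hx k]; exact hf _ _ (hmem k)
    have hne : {w | (x (k + 1), w) ∈ Λ}.Nonempty := ⟨v k, h1⟩
    have hp : v (k + 1) ∈ {w | (x (k + 1), w) ∈ Λ} := by
      rw [hv (k + 1)]; exact (hg _ hne).1
    have hmin : ∀ w ∈ {w | (x (k + 1), w) ∈ Λ}, ‖v (k + 1) - r‖ ≤ ‖w - r‖ := by
      intro w hw
      rw [hv (k + 1)]
      exact (hg _ hne).2 w hw
    exact min_sq_le_of_convex (hslice (x (k + 1))) hp h1 hmin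
  refine ⟨key, antitone_nat_of_succ_le fun k => ?_⟩
  have h1 := key k
  have h2 : ‖v (k + 1) - r‖ ^ 2 ≤ ‖v k - r‖ ^ 2 := by
    nlinarith [sq_nonneg ‖v (k + 1) - v k‖]
  exact (pow_le_pow_iff_left₀ (norm_nonneg _) (norm_nonneg _) two_ne_zero).mp h2
end

section
/- Let Γ ⊆ ℝ^{n} × ℝ^{m} be convex, R ⊆ ℝ^{m} compact and convex, G : ℝ^{m} → ℝ^{n} a linear map, and r ∈ ℝ^{m}. Suppose the equilibrium manifold Σ = {(G v, v) : v ∈ R} satisfies Σ ⊆ interior(Γ), and let r* ∈ R be a minimizer of s ↦ ‖s − r‖ over R. Then there exists δ > 0 such that for every v ∈ R with v ≠ r* and every x ∈ ℝ^{n} with ‖x − G v‖ ≤ δ, there exists s ∈ R with (x, s) ∈ Γ and ‖s − r‖ < ‖v − r‖. -/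
/-- Abstract form of Lemma 3: near the equilibrium of a suboptimal reference
`v`, the governor can find a feasible reference strictly closer to `r`. -/
theorem fg_progress_near_equilibrium
    {n m : ℕ}
    (Γ : Set (EuclideanSpace ℝ (Fin n) × EuclideanSpace ℝ (Fin m)))
    (hΓ : Convex ℝ Γ)
    (R : Set (EuclideanSpace ℝ (Fin m)))
    (hRc : IsCompact R) (hRconv : Convex ℝ R)
    (G : EuclideanSpace ℝ (Fin m) →ₗ[ℝ] EuclideanSpace ℝ (Fin n))
    (r : EuclideanSpace ℝ (Fin m))
    (hSigma : {p : EuclideanSpace ℝ (Fin n) × EuclideanSpace ℝ (Fin m) |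
            ∃ v ∈ R, p = (G v, v)} ⊆ interior Γ)
    (rstar : EuclideanSpace ℝ (Fin m)) (hrstar : rstar ∈ R)
    (hmin : ∀ s ∈ R, ‖rstar - r‖ ≤ ‖s - r‖) :
    ∃ δ > 0, ∀ v ∈ R, v ≠ rstar → ∀ x : EuclideanSpace ℝ (Fin n),
      ‖x - G v‖ ≤ δ → ∃ s ∈ R, (x, s) ∈ Γ ∧ ‖s - r‖ < ‖v - r‖ := by
  classical
  -- Σ is compact
  have hGc : Continuous G := G.continuous_of_finiteDimensional
  have hfc : Continuous (fun v : EuclideanSpace ℝ (Fin m) => ((G v, v) :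
      EuclideanSpace ℝ (Fin n) × EuclideanSpace ℝ (Fin m))) := hGc.prodMk continuous_id
  have hSeq : {p : EuclideanSpace ℝ (Fin n) × EuclideanSpace ℝ (Fin m) |
      ∃ v ∈ R, p = (G v, v)} = (fun v => (G v, v)) '' R := by
    ext p; simp [Set.mem_image, eq_comm]
  have hSc : IsCompact ((fun v : EuclideanSpace ℝ (Fin m) => ((G v, v) :
      EuclideanSpace ℝ (Fin n) × EuclideanSpace ℝ (Fin m))) '' R) := hRc.image hfc
  obtain ⟨ε, hε, hthick⟩ := hSc.exists_thickening_subset_open isOpen_interior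
    (hSeq ▸ hSigma)
  -- bound on ‖G rstar - G v‖ over R
  obtain ⟨v₀, _, hv₀⟩ := hRc.exists_isMaxOn ⟨rstar, hrstar⟩
    ((continuous_const.sub hGc).norm.continuousOn :
      ContinuousOn (fun v => ‖G rstar - G v‖) R)
  set C : ℝ := ‖G rstar - G v₀‖ with hCdef
  have hC0 : 0 ≤ C := norm_nonneg _
  have hCb : ∀ v ∈ R, ‖G rstar - G v‖ ≤ C := fun v hv => hv₀ hv
  -- choose t
  set t : ℝ := min (1/2) (ε / (3 * (C + 1))) with htdef
  have hCpos : 0 < C + 1 := by linarith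
  have ht0 : 0 < t := lt_min (by norm_num) (by positivity)
  have ht1 : t < 1 := lt_of_le_of_lt (min_le_left _ _) (by norm_num)
  have htC : t * C ≤ ε / 3 := by
    have h1 : t ≤ ε / (3 * (C + 1)) := min_le_right _ _
    have : t * C ≤ (ε / (3 * (C + 1))) * (C + 1) := by
      apply mul_le_mul h1 (by linarith) hC0 (le_of_lt (by positivity))
    calc t * C ≤ (ε / (3 * (C + 1))) * (C + 1) := this
      _ = ε / 3 := by field_simp
  refine ⟨ε / 3, by positivity, fun v hv hne x hx => ?_⟩
  set s : EuclideanSpace ℝ (Fin m) := (1 - t) • v + t • rstar with hsdef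
  have hsR : s ∈ R := hRconv hv hrstar (by linarith) (le_of_lt ht0) (by ring)
  refine ⟨s, hsR, ?_, ?_⟩
  · -- feasibility: (x, s) is within ε of (G s, s) ∈ Σ
    have hmem : ((G s, s) : EuclideanSpace ℝ (Fin n) × EuclideanSpace ℝ (Fin m)) ∈
        (fun v : EuclideanSpace ℝ (Fin m) => ((G v, v) :
          EuclideanSpace ℝ (Fin n) × EuclideanSpace ℝ (Fin m))) '' R :=
      ⟨s, hsR, rfl⟩
    have hGs : G s - G v = t • (G rstar - G v) := by
      have : s - v = t • (rstar - v) := by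
        rw [hsdef]; module
      calc G s - G v = G (s - v) := by rw [map_sub]
        _ = t • (G rstar - G v) := by rw [this, map_smul, map_sub]
    have hxs : ‖x - G s‖ < ε := by
      have h1 : ‖x - G s‖ ≤ ‖x - G v‖ + ‖G s - G v‖ := by
        have : x - G s = (x - G v) - (G s - G v) := by abel
        rw [this]; exact norm_sub_le _ _
      have h2 : ‖G s - G v‖ ≤ t * C := by
        rw [hGs, norm_smul, Real.norm_eq_abs, abs_of_pos ht0]
        exact mul_le_mul_of_nonneg_left (hCb v hv) (le_of_lt ht0)
      have : ‖x - G s‖ ≤ ε / 3 + ε / 3 := by linarith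
      linarith
    have : ((x, s) : EuclideanSpace ℝ (Fin n) × EuclideanSpace ℝ (Fin m)) ∈
        Metric.thickening ε ((fun v : EuclideanSpace ℝ (Fin m) => ((G v, v) :
          EuclideanSpace ℝ (Fin n) × EuclideanSpace ℝ (Fin m))) '' R) := by
      rw [Metric.mem_thickening_iff]
      refine ⟨(G s, s), hmem, ?_⟩
      rw [Prod.dist_eq]
      simp only [dist_self]
      rw [max_eq_left (dist_nonneg)]
      rwa [dist_eq_norm]
    exact interior_subset (hthick this)
  · -- strict decrease
    have hkey : s - r = (1 - t) • (v - r) + t • (rstar - r) := by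
      rw [hsdef]; module
    rw [hkey]
    exact norm_combo_lt_of_ne le_rfl (hmin v hv)
      (fun h => hne (sub_left_injective h)) (by linarith) ht0 (by ring)
end

section
/- Let Γ ⊆ ℝ^{n} × ℝ^{m} be convex, R ⊆ ℝ^{m} compact and convex, G : ℝ^{m} → ℝ^{n} linear, r ∈ ℝ^{m}, and suppose Σ = {(G v, v) : v ∈ R} ⊆ interior(Γ). Let Λ = Γ ∩ (ℝ^{n} × R) and let r* ∈ R be a minimizer of s ↦ ‖s − r‖ over R. Then for every v ∈ R: v is a minimizer of s ↦ ‖s − r‖ over the slice S_v(Λ, G v) = {s : (G v, s) ∈ Λ} if and only if v = r*. -/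
/-!
Because `(G v, v)` lies in the interior of `Γ`, the slice of `Λ` at `G v` contains a
neighbourhood of `v` in `R`, so optimality over the slice makes `v` a local minimizer of the
convex function `s ↦ ‖s - r‖` on the convex set `R`, hence a global one. In a strictly convex
space the nearest point of a convex set is unique, so `v = r*`.
-/

open Filter Topology

theorem mem_nhds_of_mk_mem_interior {X Y : Type*} [TopologicalSpace X] [TopologicalSpace Y]
    {Γ : Set (X × Y)} {x : X} {y : Y} (h : (x, y) ∈ interior Γ) :
    {s | (x, s) ∈ Γ} ∈ 𝓝 y :=
  (Continuous.prodMk_right x).continuousAt.preimage_mem_nhds (mem_interior_iff_mem_nhds.mp h)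

section NearestPoint

variable {E : Type*} [NormedAddCommGroup E] [NormedSpace ℝ E] {s : Set E} {r : E}

theorem convexOn_norm_sub (hs : Convex ℝ s) (r : E) : ConvexOn ℝ s fun x => ‖x - r‖ := by
  simpa only [dist_eq_norm] using convexOn_dist r hs

theorem eq_of_isMinOn_norm_sub [StrictConvexSpace ℝ E] (hs : Convex ℝ s) {x y : E}
    (hx : x ∈ s) (hy : y ∈ s) (hmx : IsMinOn (‖· - r‖) s x)
    (hmy : IsMinOn (‖· - r‖) s y) : x = y := by
  by_contra hne
  have hnorm : ‖x - r‖ = ‖y - r‖ := le_antisymm (hmx hy) (hmy hx)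
  have hmid : (1 / 2 : ℝ) • (x + y) ∈ s := by
    simpa [smul_add] using
      hs hx hy (by norm_num) (by norm_num) (by norm_num : (1 / 2 : ℝ) + 1 / 2 = 1)
  have hlt : ‖(1 / 2 : ℝ) • ((x - r) + (y - r))‖ < ‖x - r‖ :=
    (norm_midpoint_lt_iff hnorm).mpr (sub_left_injective.ne hne)
  have hsplit : (1 / 2 : ℝ) • (x + y) - r = (1 / 2 : ℝ) • ((x - r) + (y - r)) := by module
  have hle : ‖x - r‖ ≤ ‖(1 / 2 : ℝ) • (x + y) - r‖ := hmx hmid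
  exact hle.not_gt (hsplit ▸ hlt)

theorem eq_of_isLocalMinOn_norm_sub [StrictConvexSpace ℝ E] (hs : Convex ℝ s) {x y : E}
    (hx : x ∈ s) (hy : y ∈ s) (hmx : IsLocalMinOn (‖· - r‖) s x)
    (hmy : IsMinOn (‖· - r‖) s y) : x = y :=
  eq_of_isMinOn_norm_sub hs hx hy (.of_isLocalMinOn_of_convexOn hx hmx (convexOn_norm_sub hs r)) hmy

end NearestPoint

theorem fg_fixed_point_characterization_general
    {n m : ℕ}
    (Γ : Set (EuclideanSpace ℝ (Fin n) × EuclideanSpace ℝ (Fin m)))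
    (R : Set (EuclideanSpace ℝ (Fin m)))
    (hRconv : Convex ℝ R)
    (G : EuclideanSpace ℝ (Fin m) →ₗ[ℝ] EuclideanSpace ℝ (Fin n))
    (r : EuclideanSpace ℝ (Fin m))
    (hSigma : {p : EuclideanSpace ℝ (Fin n) × EuclideanSpace ℝ (Fin m) |
            ∃ v ∈ R, p = (G v, v)} ⊆ interior Γ)
    (Λ : Set (EuclideanSpace ℝ (Fin n) × EuclideanSpace ℝ (Fin m)))
    (hΛ : Λ = Γ ∩ {p | p.2 ∈ R})
    (rstar : EuclideanSpace ℝ (Fin m)) (hrstar : rstar ∈ R)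
    (hmin : ∀ s ∈ R, ‖rstar - r‖ ≤ ‖s - r‖) :
    ∀ v ∈ R,
      ((G v, v) ∈ Λ ∧ ∀ s, (G v, s) ∈ Λ → ‖v - r‖ ≤ ‖s - r‖) ↔ v = rstar := by
  intro v hv
  subst hΛ
  have hint : (G v, v) ∈ interior Γ := hSigma ⟨v, hv, rfl⟩
  constructor
  · rintro ⟨-, hopt⟩
    have hlocal : IsLocalMinOn (‖· - r‖) R v := by
      filter_upwards [self_mem_nhdsWithin,
        nhdsWithin_le_nhds (mem_nhds_of_mk_mem_interior hint)] with s hsR hsΓ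
      exact hopt s ⟨hsΓ, hsR⟩
    exact eq_of_isLocalMinOn_norm_sub hRconv hv hrstar hlocal hmin
  · rintro rfl
    exact ⟨⟨interior_subset hint, hv⟩, fun s hs => hmin s hs.2⟩

/-- Fixed-point characterization `g(G v) = v ↔ v = r*` from the proof of
Lemma 4. -/
theorem fg_fixed_point_characterization
    {n m : ℕ}
    (Γ : Set (EuclideanSpace ℝ (Fin n) × EuclideanSpace ℝ (Fin m)))
    (hΓ : Convex ℝ Γ)
    (R : Set (EuclideanSpace ℝ (Fin m)))
    (hRc : IsCompact R) (hRconv : Convex ℝ R)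
    (G : EuclideanSpace ℝ (Fin m) →ₗ[ℝ] EuclideanSpace ℝ (Fin n))
    (r : EuclideanSpace ℝ (Fin m))
    (hSigma : {p : EuclideanSpace ℝ (Fin n) × EuclideanSpace ℝ (Fin m) |
            ∃ v ∈ R, p = (G v, v)} ⊆ interior Γ)
    (Λ : Set (EuclideanSpace ℝ (Fin n) × EuclideanSpace ℝ (Fin m)))
    (hΛ : Λ = Γ ∩ {p | p.2 ∈ R})
    (rstar : EuclideanSpace ℝ (Fin m)) (hrstar : rstar ∈ R)
    (hmin : ∀ s ∈ R, ‖rstar - r‖ ≤ ‖s - r‖) :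
    ∀ v ∈ R,
      ((G v, v) ∈ Λ ∧ ∀ s, (G v, s) ∈ Λ → ‖v - r‖ ≤ ‖s - r‖) ↔ v = rstar :=
  fg_fixed_point_characterization_general Γ R hRconv G r hSigma Λ hΛ rstar hrstar hmin
end

section
/- Let Γ ⊆ ℝ^{n} × ℝ^{m} be convex, R ⊆ ℝ^{m} compact and convex, G : ℝ^{m} → ℝ^{n} linear, r ∈ ℝ^{m}, with Σ = {(G v, v) : v ∈ R} ⊆ interior(Γ); let Λ = Γ ∩ (ℝ^{n} × R) and r* ∈ R a minimizer of s ↦ ‖s − r‖ over R. Let f : ℝ^{n} × ℝ^{m} → ℝ^{n} satisfy: (i) (x, v) ∈ Λ implies (f(x, v), v) ∈ Λ, and (ii) for every (x, v) ∈ Λ the iterates φ(0, x, v) = x, φ(ℓ+1, x, v) = f(φ(ℓ, x, v), v) converge to G v as ℓ → ∞. Let g : ℝ^{n} → ℝ^{m} satisfy: whenever S_v(Λ, x) = {s : (x, s) ∈ Λ} is nonempty, g(x) ∈ S_v(Λ, x) and ‖g(x) − r‖ ≤ ‖s − r‖ for all s ∈ S_v(Λ, x). Then any closed-loop trajectory v_k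 = g(x_k), x_{k+1} = f(x_k, v_k) with (x_0, v_0) ∈ Λ that satisfies g(f(x_k, v_k)) = v_k for all k ∈ ℕ must have v_0 = r*. -/
/-- Abstract form of Lemma 4: the only closed-loop trajectories remaining
forever in `Ω = {(x, v) ∈ Λ : g (f x v) = v}` have reference `r*`. -/
theorem fg_largest_invariant_set
    {n m : ℕ}
    (Γ : Set (EuclideanSpace ℝ (Fin n) × EuclideanSpace ℝ (Fin m)))
    (hΓ : Convex ℝ Γ)
    (R : Set (EuclideanSpace ℝ (Fin m)))
    (hRc : IsCompact R) (hRconv : Convex ℝ R)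
    (G : EuclideanSpace ℝ (Fin m) →ₗ[ℝ] EuclideanSpace ℝ (Fin n))
    (r : EuclideanSpace ℝ (Fin m))
    (hSigma : {p : EuclideanSpace ℝ (Fin n) × EuclideanSpace ℝ (Fin m) |
            ∃ v ∈ R, p = (G v, v)} ⊆ interior Γ)
    (Λ : Set (EuclideanSpace ℝ (Fin n) × EuclideanSpace ℝ (Fin m)))
    (hΛ : Λ = Γ ∩ {p | p.2 ∈ R})
    (rstar : EuclideanSpace ℝ (Fin m)) (hrstar : rstar ∈ R)
    (hmin : ∀ s ∈ R, ‖rstar - r‖ ≤ ‖s - r‖)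
    (f : EuclideanSpace ℝ (Fin n) → EuclideanSpace ℝ (Fin m) → EuclideanSpace ℝ (Fin n))
    (hf : ∀ x v, (x, v) ∈ Λ → (f x v, v) ∈ Λ)
    (φ : ℕ → EuclideanSpace ℝ (Fin n) → EuclideanSpace ℝ (Fin m) → EuclideanSpace ℝ (Fin n))
    (hφ0 : ∀ x v, φ 0 x v = x)
    (hφs : ∀ ℓ x v, φ (ℓ + 1) x v = f (φ ℓ x v) v)
    (hconv : ∀ x v, (x, v) ∈ Λ →
      Filter.Tendsto (fun ℓ => φ ℓ x v) Filter.atTop (nhds (G v)))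
    (g : EuclideanSpace ℝ (Fin n) → EuclideanSpace ℝ (Fin m))
    (hg : ∀ x : EuclideanSpace ℝ (Fin n), {s | (x, s) ∈ Λ}.Nonempty →
      (x, g x) ∈ Λ ∧ ∀ s, (x, s) ∈ Λ → ‖g x - r‖ ≤ ‖s - r‖)
    (x : ℕ → EuclideanSpace ℝ (Fin n))
    (v : ℕ → EuclideanSpace ℝ (Fin m))
    (hv : ∀ k, v k = g (x k))
    (hx : ∀ k, x (k + 1) = f (x k) (v k))
    (h0 : (x 0, v 0) ∈ Λ)
    (hΩ : ∀ k, g (f (x k) (v k)) = v k) :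
    v 0 = rstar := by
  -- v is constant along the trajectory
  have hvconst : ∀ k, v k = v 0 := by
    intro k
    induction k with
    | zero => rfl
    | succ k ih =>
      have : v (k + 1) = v k := by rw [hv (k + 1), hx k, hΩ k]
      rw [this, ih]
  -- each (x k, v 0) ∈ Λ
  have hmem : ∀ k, (x k, v 0) ∈ Λ := by
    intro k
    induction k with
    | zero => exact h0
    | succ k ih =>
      have := hf (x k) (v 0) ih
      rwa [hx k, hvconst k]
  -- x k = φ k (x 0) (v 0)
  have hxφ : ∀ k, x k = φ k (x 0) (v 0) := by
    intro k
    induction k with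
    | zero => rw [hφ0]
    | succ k ih => rw [hx k, hvconst k, hφs, ← ih]
  have hv0R : v 0 ∈ R := by
    have := h0; rw [hΛ] at this; exact this.2
  -- x k → G (v 0)
  have htend : Filter.Tendsto (fun k => x k) Filter.atTop (nhds (G (v 0))) := by
    have h := hconv (x 0) (v 0) h0
    refine h.congr fun k => (hxφ k).symm
  -- (G (v 0), v 0) is interior to Γ
  have hint : ((G (v 0) : EuclideanSpace ℝ (Fin n)), v 0) ∈ interior Γ :=
    hSigma ⟨v 0, hv0R, rfl⟩
  obtain ⟨ε, hε, hball⟩ := Metric.isOpen_iff.1 isOpen_interior _ hint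
  -- Key claim: v 0 minimizes distance to r over R
  have hkey : ∀ s ∈ R, ‖v 0 - r‖ ≤ ‖s - r‖ := by
    intro s hs
    -- choose small λ
    set lam : ℝ := min 1 (ε / (2 * (‖s - v 0‖ + 1))) with hlam
    have hden : (0 : ℝ) < 2 * (‖s - v 0‖ + 1) := by positivity
    have hlam0 : 0 < lam := lt_min one_pos (div_pos hε hden)
    have hlam1 : lam ≤ 1 := min_le_left _ _
    have hlamsmall : lam * ‖s - v 0‖ < ε := by
      calc lam * ‖s - v 0‖ ≤ (ε / (2 * (‖s - v 0‖ + 1))) * ‖s - v 0‖ := by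
            apply mul_le_mul_of_nonneg_right (min_le_right _ _) (norm_nonneg _)
        _ < ε := by
            rw [div_mul_eq_mul_div, div_lt_iff₀ hden]
            have h1 : ‖s - v 0‖ < 2 * (‖s - v 0‖ + 1) := by nlinarith [norm_nonneg (s - v 0)]
            nlinarith
    set vl : EuclideanSpace ℝ (Fin m) := v 0 + lam • (s - v 0) with hvl
    have hvlR : vl ∈ R := by
      have : vl = (1 - lam) • v 0 + lam • s := by
        simp [hvl, smul_sub, sub_smul]; abel
      rw [this]
      exact hRconv hv0R hs (by linarith) (le_of_lt hlam0) (by ring)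
    -- choose k with x k close to G (v 0)
    obtain ⟨N, hN⟩ := Metric.tendsto_atTop.1 htend ε hε
    set k := N with hkdef
    have hk : dist (x k) (G (v 0)) < ε := hN N le_rfl
    -- (x k, vl) ∈ Γ
    have hmemΓ : (x k, vl) ∈ Γ := by
      apply interior_subset
      apply hball
      rw [Metric.mem_ball, Prod.dist_eq]
      apply max_lt hk
      rw [dist_eq_norm]
      have : vl - v 0 = lam • (s - v 0) := by simp [hvl]
      rw [this, norm_smul, Real.norm_eq_abs, abs_of_pos hlam0]
      exact hlamsmall
    have hmemΛ : (x k, vl) ∈ Λ := by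
      rw [hΛ]; exact ⟨hmemΓ, hvlR⟩
    -- optimality of g (x k) = v 0
    have hne : {s | (x k, s) ∈ Λ}.Nonempty := ⟨v 0, hmem k⟩
    have hopt := (hg (x k) hne).2 vl hmemΛ
    have hgxk : g (x k) = v 0 := by rw [← hv k, hvconst k]
    rw [hgxk] at hopt
    -- convexity of the norm
    have hsplit : vl - r = (1 - lam) • (v 0 - r) + lam • (s - r) := by
      simp [hvl, smul_sub, sub_smul]; abel
    have hconvn : ‖vl - r‖ ≤ (1 - lam) * ‖v 0 - r‖ + lam * ‖s - r‖ := by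
      rw [hsplit]
      calc ‖(1 - lam) • (v 0 - r) + lam • (s - r)‖
          ≤ ‖(1 - lam) • (v 0 - r)‖ + ‖lam • (s - r)‖ := norm_add_le _ _
        _ = (1 - lam) * ‖v 0 - r‖ + lam * ‖s - r‖ := by
            rw [norm_smul, norm_smul, Real.norm_eq_abs, Real.norm_eq_abs,
              abs_of_nonneg (by linarith : (0:ℝ) ≤ 1 - lam), abs_of_pos hlam0]
    nlinarith [hopt]
  -- uniqueness of the minimizer via the parallelogram law
  have h1 : ‖v 0 - r‖ ≤ ‖rstar - r‖ := hkey rstar hrstar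
  have h2 : ‖rstar - r‖ ≤ ‖v 0 - r‖ := hmin (v 0) hv0R
  have heq : ‖v 0 - r‖ = ‖rstar - r‖ := le_antisymm h1 h2
  set w : EuclideanSpace ℝ (Fin m) := (1/2 : ℝ) • v 0 + (1/2 : ℝ) • rstar with hw
  have hwR : w ∈ R := hRconv hv0R hrstar (by norm_num) (by norm_num) (by norm_num)
  have hwge : ‖rstar - r‖ ≤ ‖w - r‖ := hmin w hwR
  have hpar : ‖(v 0 - r) + (rstar - r)‖ ^ 2 + ‖(v 0 - r) - (rstar - r)‖ ^ 2
      = 2 * (‖v 0 - r‖ ^ 2 + ‖rstar - r‖ ^ 2) := by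
    simpa [sq] using parallelogram_law_with_norm ℝ (v 0 - r) (rstar - r)
  have hwsum : (v 0 - r) + (rstar - r) = (2 : ℝ) • (w - r) := by
    rw [hw]; module
  have hnormsum : ‖(v 0 - r) + (rstar - r)‖ = 2 * ‖w - r‖ := by
    rw [hwsum, norm_smul, Real.norm_eq_abs]; norm_num
  have hdiff : (v 0 - r) - (rstar - r) = v 0 - rstar := by abel
  have hzero : ‖v 0 - rstar‖ ^ 2 ≤ 0 := by
    have h3 : (2 * ‖w - r‖) ^ 2 + ‖v 0 - rstar‖ ^ 2 = 2 * (‖v 0 - r‖ ^ 2 + ‖rstar - r‖ ^ 2) := by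
      rw [← hnormsum, ← hdiff]; exact hpar
    nlinarith [hwge, norm_nonneg (w - r), norm_nonneg (rstar - r), heq]
  have : v 0 - rstar = 0 := by
    have := norm_nonneg (v 0 - rstar)
    have h4 : ‖v 0 - rstar‖ = 0 := by nlinarith
    exact norm_eq_zero.1 h4
  exact sub_eq_zero.1 this
end

section
/- Let A : ℝ^{n} → ℝ^{n}, B : ℝ^{p} → ℝ^{n}, C : ℝ^{n} → ℝ^{q}, D : ℝ^{p} → ℝ^{q} be linear maps, Y ⊆ ℝ^{q}, and T ⊆ ℝ^{n} × ℝ^{m}. Define Γ_0 = T and Γ_{i+1} = {(x, v) : ∃ u ∈ ℝ^{p}, C x + D u ∈ Y and (A x + B u, v) ∈ Γ_i}. If T ⊆ Γ_1, then for every N ∈ ℕ with N ≥ 1 and every (x, v) ∈ Γ_N, there exists u ∈ ℝ^{p} such that C x + D u ∈ Y and (A x + B u, v) ∈ Γ_N; that is, Γ_N is control invariant with constraint satisfaction. -/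
/-- Control invariance with constraint satisfaction of the feasible set:
from any `(x, v) ∈ Γ_N` (with `N ≥ 1`) there is an admissible input keeping
the successor state in `Γ_N`. -/
theorem feasible_set_control_invariant
    {n m p q : ℕ}
    (A : EuclideanSpace ℝ (Fin n) →ₗ[ℝ] EuclideanSpace ℝ (Fin n))
    (B : EuclideanSpace ℝ (Fin p) →ₗ[ℝ] EuclideanSpace ℝ (Fin n))
    (C : EuclideanSpace ℝ (Fin n) →ₗ[ℝ] EuclideanSpace ℝ (Fin q))
    (D : EuclideanSpace ℝ (Fin p) →ₗ[ℝ] EuclideanSpace ℝ (Fin q))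
    (Y : Set (EuclideanSpace ℝ (Fin q)))
    (T : Set (EuclideanSpace ℝ (Fin n) × EuclideanSpace ℝ (Fin m)))
    (Γ : ℕ → Set (EuclideanSpace ℝ (Fin n) × EuclideanSpace ℝ (Fin m)))
    (hΓ0 : Γ 0 = T)
    (hΓs : ∀ i, Γ (i + 1) =
      {p' | ∃ u : EuclideanSpace ℝ (Fin p),
        C p'.1 + D u ∈ Y ∧ (A p'.1 + B u, p'.2) ∈ Γ i})
    (hT : T ⊆ Γ 1) :
    ∀ N : ℕ, 1 ≤ N → ∀ x v, (x, v) ∈ Γ N →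
      ∃ u : EuclideanSpace ℝ (Fin p),
        C x + D u ∈ Y ∧ (A x + B u, v) ∈ Γ N := by
  have mono : ∀ i, Γ i ⊆ Γ (i + 1) := by
    intro i
    induction i with
    | zero => rw [hΓ0]; exact hT
    | succ k ih =>
      rw [hΓs k, hΓs (k + 1)]
      rintro ⟨a, b⟩ ⟨u, hu1, hu2⟩
      exact ⟨u, hu1, ih hu2⟩
  rintro N hN x v hxv
  obtain ⟨k, rfl⟩ := Nat.exists_eq_add_of_le hN
  rw [Nat.add_comm] at hxv ⊢
  rw [hΓs k] at hxv
  obtain ⟨u, hu1, hu2⟩ := hxv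
  exact ⟨u, hu1, mono k hu2⟩
end
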